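/- Let A ∈ M₂(ℂ) be non-normal. Then for every z on the boundary of F(A), any two unit vectors x, y with x*Ax = y*Ay = z are unimodular scalar multiples of each other (i.e., the preimage f_A^{-1}(z) lies in a one-dimensional complex subspace). -/

import Mathlib

open Matrix

/-- The map `f_A(x) = x* A x` on `ℂ^n` (with the Euclidean norm). -/
noncomputable def numRangeMap {n : ℕ} (A : Matrix (Fin n) (Fin n) ℂ)
    (x : EuclideanSpace ℂ (Fin n)) : ℂ :=
  star (x : Fin n → ℂ) ⬝ᵥ A.mulVec (x : Fin n → ℂ)

/-- The numerical range `F(A)`. -/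
noncomputable def numRange {n : ℕ} (A : Matrix (Fin n) (Fin n) ℂ) : Set ℂ :=
  numRangeMap A '' Metric.sphere 0 1

/-!
A boundary point `z` of the convex set `F(A)` (Toeplitz–Hausdorff) has a supporting line: some
`u ≠ 0` with `Re (conj u * w) ≤ Re (conj u * z)` on `F(A)`. Every unit vector with `x* A x = z`
then maximizes the Rayleigh quotient of the Hermitian matrix `conj u • A + u • Aᴴ`, so it is an
eigenvector for its top eigenvalue. If two such vectors were independent they would span `ℂ²`,
making `conj u • A + u • Aᴴ` scalar; then `Aᴴ` is a polynomial in `A` and `A` would be normal.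
-/

open Set Metric Module.End
open scoped InnerProductSpace ComplexConjugate

theorem exists_inner_le_of_mem_frontier {E : Type*} [NormedAddCommGroup E] [InnerProductSpace ℝ E]
    [FiniteDimensional ℝ E] {s : Set E} (hs : Convex ℝ s) {x : E} (hx : x ∈ frontier s) :
    ∃ u ≠ 0, ∀ a ∈ s, ⟪u, a⟫_ℝ ≤ ⟪u, x⟫_ℝ := by
  suffices ∃ f : StrongDual ℝ E, f ≠ 0 ∧ ∀ a ∈ s, f a ≤ f x by
    obtain ⟨f, hf, hfs⟩ := this
    refine ⟨(InnerProductSpace.toDual ℝ E).symm f, by simpa using hf, ?_⟩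
    simpa only [InnerProductSpace.toDual_symm_apply] using hfs
  by_cases hint : (interior s).Nonempty
  · exact geometric_hahn_banach_of_nonempty_interior_point hs hx.2 hint
  -- otherwise `s` lies in a proper affine subspace, on which a functional killing its direction
  -- is constant
  have hspan : (affineSpan ℝ s).direction < ⊤ := by
    rw [lt_top_iff_ne_top, Ne, AffineSubspace.direction_eq_top_iff_of_nonempty]
    · rwa [← hs.interior_nonempty_iff_affineSpan_eq_top]
    · exact (affineSpan_nonempty ℝ).2 (closure_nonempty_iff.1 ⟨x, hx.1⟩)
  obtain ⟨f, hf, hker⟩ := Submodule.exists_le_ker_of_lt_top _ hspan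
  have hxs : x ∈ affineSpan ℝ s :=
    closure_minimal (subset_affineSpan ℝ s) (AffineSubspace.closed_of_finiteDimensional _) hx.1
  refine ⟨LinearMap.toContinuousLinearMap f, by simpa using hf, fun a ha => le_of_eq ?_⟩
  have := hker (AffineSubspace.vsub_mem_direction (subset_affineSpan ℝ s ha) hxs)
  simpa [sub_eq_zero] using this

theorem norm_eq_one_of_eq_smul {E : Type*} [NormedAddCommGroup E] [NormedSpace ℂ E] {x y : E}
    (hx : ‖x‖ = 1) (hy : ‖y‖ = 1) {c : ℂ} (h : y = c • x) : ‖c‖ = 1 := by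
  simpa [h, norm_smul, hx] using hy

theorem exists_norm_eq_one_im_conj_mul_eq_zero (m : ℂ) :
    ∃ d : ℂ, ‖d‖ = 1 ∧ (conj d * m).im = 0 := by
  refine ⟨Complex.exp (m.arg * Complex.I), Complex.norm_exp_ofReal_mul_I _, ?_⟩
  nth_rw 2 [← Complex.norm_mul_exp_arg_mul_I m]
  rw [mul_left_comm, ← Complex.normSq_eq_conj_mul_self]
  simp

theorem commute_of_smul_add_smul_eq_smul_one {K R : Type*} [Field K] [Ring R] [Algebra K R]
    {x y : R} {a b μ : K} (hb : b ≠ 0) (h : a • x + b • y = μ • 1) : Commute x y := by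
  have hy : y = b⁻¹ • (μ • 1 - a • x) := by
    rw [← h, add_sub_cancel_left, smul_smul, inv_mul_cancel₀ hb, one_smul]
  rw [hy]
  exact (((Commute.one_right x).smul_right μ).sub_right
    ((Commute.refl x).smul_right a)).smul_right _

theorem exists_eq_smul_of_mem_of_ne_top {K V : Type*} [Field K] [AddCommGroup V] [Module K V]
    [FiniteDimensional K V] (hV : Module.finrank K V ≤ 2) {W : Submodule K V} (hW : W ≠ ⊤)
    {x y : V} (hx : x ∈ W) (hx0 : x ≠ 0) (hy : y ∈ W) : ∃ c : K, y = c • x := by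
  have hx0' : (⟨x, hx⟩ : W) ≠ 0 := by simpa using hx0
  have hW1 : Module.finrank K W = 1 := by
    have := Submodule.finrank_lt hW
    have := (Module.finrank_pos_iff_exists_ne_zero (R := K) (M := W)).2 ⟨_, hx0'⟩
    omega
  obtain ⟨c, hc⟩ := (finrank_eq_one_iff_of_nonzero' _ hx0').1 hW1 ⟨y, hy⟩
  exact ⟨c, by simpa using congrArg Subtype.val hc.symm⟩

section NumericalRange

variable {n : ℕ}

theorem numRangeMap_eq_inner (A : Matrix (Fin n) (Fin n) ℂ) (x : EuclideanSpace ℂ (Fin n)) :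
    numRangeMap A x = ⟪x, toEuclideanCLM (𝕜 := ℂ) A x⟫_ℂ := by
  rw [EuclideanSpace.inner_eq_star_dotProduct, ofLp_toEuclideanCLM, dotProduct_comm]
  rfl

theorem continuous_numRangeMap (A : Matrix (Fin n) (Fin n) ℂ) : Continuous (numRangeMap A) := by
  simp only [funext (numRangeMap_eq_inner A)]
  fun_prop

theorem numRangeMap_add (A B : Matrix (Fin n) (Fin n) ℂ) (x : EuclideanSpace ℂ (Fin n)) :
    numRangeMap (A + B) x = numRangeMap A x + numRangeMap B x := by
  simp only [numRangeMap_eq_inner, map_add, _root_.add_apply, inner_add_right]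

theorem numRangeMap_sub (A B : Matrix (Fin n) (Fin n) ℂ) (x : EuclideanSpace ℂ (Fin n)) :
    numRangeMap (A - B) x = numRangeMap A x - numRangeMap B x := by
  simp only [numRangeMap_eq_inner, map_sub, _root_.sub_apply, inner_sub_right]

theorem numRangeMap_smul (c : ℂ) (A : Matrix (Fin n) (Fin n) ℂ) (x : EuclideanSpace ℂ (Fin n)) :
    numRangeMap (c • A) x = c * numRangeMap A x := by
  simp only [numRangeMap_eq_inner, map_smul, _root_.smul_apply, inner_smul_right]

theorem numRangeMap_one (x : EuclideanSpace ℂ (Fin n)) : numRangeMap 1 x = (‖x‖ ^ 2 : ℝ) := by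
  simp [numRangeMap_eq_inner, inner_self_eq_norm_sq_to_K]

theorem numRangeMap_conjTranspose (A : Matrix (Fin n) (Fin n) ℂ) (x : EuclideanSpace ℂ (Fin n)) :
    numRangeMap Aᴴ x = conj (numRangeMap A x) := by
  rw [numRangeMap_eq_inner, numRangeMap_eq_inner, ← star_eq_conjTranspose, map_star,
    ContinuousLinearMap.star_eq_adjoint, ContinuousLinearMap.adjoint_inner_right,
    inner_conj_symm]

theorem numRangeMap_apply_smul (A : Matrix (Fin n) (Fin n) ℂ) (c : ℂ)
    (x : EuclideanSpace ℂ (Fin n)) :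
    numRangeMap A (c • x) = (‖c‖ ^ 2 : ℝ) * numRangeMap A x := by
  rw [numRangeMap_eq_inner, numRangeMap_eq_inner, map_smul, inner_smul_left, inner_smul_right,
    ← mul_assoc, ← Complex.normSq_eq_conj_mul_self, Complex.normSq_eq_norm_sq]

theorem numRangeMap_apply_real_smul_add_real_smul (A : Matrix (Fin n) (Fin n) ℂ) (a b : ℝ)
    (x y : EuclideanSpace ℂ (Fin n)) :
    numRangeMap A ((a : ℂ) • x + (b : ℂ) • y) = a ^ 2 * numRangeMap A x
      + a * b * (⟪x, toEuclideanCLM (𝕜 := ℂ) A y⟫_ℂ + ⟪y, toEuclideanCLM (𝕜 := ℂ) A x⟫_ℂ)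
      + b ^ 2 * numRangeMap A y := by
  simp only [numRangeMap_eq_inner, map_add, map_smul, inner_add_left, inner_add_right,
    inner_smul_left, inner_smul_right, Complex.conj_ofReal]
  ring

theorem div_norm_sq_mem_numRange (A : Matrix (Fin n) (Fin n) ℂ) {x : EuclideanSpace ℂ (Fin n)}
    (hx : x ≠ 0) : numRangeMap A x / (‖x‖ ^ 2 : ℝ) ∈ numRange A := by
  refine ⟨((‖x‖⁻¹ : ℝ) : ℂ) • x, ?_, ?_⟩
  · simp [norm_smul, hx]
  · rw [numRangeMap_apply_smul, Complex.norm_real, norm_inv, norm_norm, inv_pow, div_eq_inv_mul,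
      Complex.ofReal_inv]

theorem linearIndependent_of_numRangeMap_ne (A : Matrix (Fin n) (Fin n) ℂ)
    {x y : EuclideanSpace ℂ (Fin n)} (hx : ‖x‖ = 1) (hy : ‖y‖ = 1)
    (h : numRangeMap A x ≠ numRangeMap A y) : LinearIndependent ℂ ![x, y] := by
  have hx0 : x ≠ 0 := by rintro rfl; simp at hx
  refine (LinearIndependent.pair_iff' hx0).2 fun c hyc => h ?_
  rw [← hyc, numRangeMap_apply_smul, norm_eq_one_of_eq_smul hx hy hyc.symm]
  simp

theorem ofReal_mem_numRange_of_mem_Icc_of_im_cross_eq_zero (A : Matrix (Fin n) (Fin n) ℂ)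
    {x y : EuclideanSpace ℂ (Fin n)} (hx : ‖x‖ = 1) (hy : ‖y‖ = 1)
    (h1 : numRangeMap A x = 1) (h0 : numRangeMap A y = 0)
    (hcross : (⟪x, toEuclideanCLM (𝕜 := ℂ) A y⟫_ℂ + ⟪y, toEuclideanCLM (𝕜 := ℂ) A x⟫_ℂ).im = 0)
    {a : ℝ} (ha : a ∈ Icc (0 : ℝ) 1) : (a : ℂ) ∈ numRange A := by
  set v : ℝ → EuclideanSpace ℂ (Fin n) := fun t => ((1 - t : ℝ) : ℂ) • x + (t : ℂ) • y
  have hv0 : ∀ t, v t ≠ 0 := fun t hvt => by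
    obtain ⟨h1t, ht⟩ := LinearIndependent.pair_iff.1
      (linearIndependent_of_numRangeMap_ne A hx hy (by simp [h1, h0])) _ _ hvt
    simp [ht] at h1t
  have hv_re : ∀ t, numRangeMap A (v t) = (numRangeMap A (v t)).re := fun t => by
    refine Complex.ext rfl ?_
    rw [numRangeMap_apply_real_smul_add_real_smul, h1, h0]
    simp [sq, hcross]
  set g : ℝ → ℝ := fun t => (numRangeMap A (v t)).re / ‖v t‖ ^ 2
  have hg : Continuous g := by
    have hv : Continuous v := by fun_prop
    exact ((Complex.continuous_re.comp ((continuous_numRangeMap A).comp hv)).div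
      ((continuous_norm.comp hv).pow 2) fun t => pow_ne_zero 2 (norm_ne_zero_iff.2 (hv0 t)))
  obtain ⟨t, rfl⟩ : a ∈ range g :=
    intermediate_value_univ 1 0 hg (by simpa [g, v, hx, hy, h1, h0] using ha)
  convert div_norm_sq_mem_numRange A (hv0 t) using 1
  rw [hv_re t]
  simp [g]

theorem ofReal_mem_numRange_of_mem_Icc (A : Matrix (Fin n) (Fin n) ℂ)
    {x y : EuclideanSpace ℂ (Fin n)} (hx : ‖x‖ = 1) (hy : ‖y‖ = 1)
    (h1 : numRangeMap A x = 1) (h0 : numRangeMap A y = 0)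
    {a : ℝ} (ha : a ∈ Icc (0 : ℝ) 1) : (a : ℂ) ∈ numRange A := by
  set T := toEuclideanCLM (n := Fin n) (𝕜 := ℂ) A
  -- the cross term of `d • x, y` is `conj d * ⟪x, T y⟫ + d * ⟪y, T x⟫`: a phase `d` makes it real
  obtain ⟨d, hd, him⟩ := exists_norm_eq_one_im_conj_mul_eq_zero (⟪x, T y⟫_ℂ - conj ⟪y, T x⟫_ℂ)
  refine ofReal_mem_numRange_of_mem_Icc_of_im_cross_eq_zero A (x := d • x)
    (by simp [norm_smul, hd, hx]) hy (by simp [numRangeMap_apply_smul, hd, h1]) h0 ?_ ha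
  rw [map_smul, inner_smul_left, inner_smul_right]
  convert him using 1
  simp only [Complex.add_im, Complex.mul_im, Complex.sub_re, Complex.sub_im, Complex.conj_re,
    Complex.conj_im]
  ring

theorem convex_numRange (A : Matrix (Fin n) (Fin n) ℂ) : Convex ℝ (numRange A) := by
  rintro _ ⟨x, hx, rfl⟩ _ ⟨y, hy, rfl⟩ a b ha hb hab
  rw [mem_sphere_zero_iff_norm] at hx hy
  rcases eq_or_ne (numRangeMap A x) (numRangeMap A y) with hxy | hxy
  · exact ⟨x, by simpa using hx, by rw [← hxy, ← add_smul, hab, one_smul]⟩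
  set p := numRangeMap A x
  set q := numRangeMap A y
  have hB : ∀ v : EuclideanSpace ℂ (Fin n), ‖v‖ = 1 →
      numRangeMap ((p - q)⁻¹ • (A - q • 1)) v = (p - q)⁻¹ * (numRangeMap A v - q) := by
    intro v hv
    simp [numRangeMap_smul, numRangeMap_sub, numRangeMap_one, hv]
  have hpq : p - q ≠ 0 := sub_ne_zero.2 hxy
  obtain ⟨v, hv, hBv⟩ := ofReal_mem_numRange_of_mem_Icc _ hx hy
    (by rw [hB x hx]; exact inv_mul_cancel₀ hpq) (by rw [hB y hy, sub_self, mul_zero])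
    ⟨ha, by linarith⟩
  refine ⟨v, hv, ?_⟩
  rw [hB v (by simpa using hv), inv_mul_eq_iff_eq_mul₀ hpq] at hBv
  have hab' : (a : ℂ) + b = 1 := by exact_mod_cast hab
  rw [Complex.real_smul, Complex.real_smul]
  linear_combination hBv - q * hab'

theorem isSelfAdjoint_toEuclideanCLM_smul_add_smul_conjTranspose
    (A : Matrix (Fin n) (Fin n) ℂ) (u : ℂ) :
    IsSelfAdjoint (toEuclideanCLM (𝕜 := ℂ) (star u • A + u • Aᴴ)) := by
  have := IsSelfAdjoint.add_star_self (star u • A)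
  rw [star_smul, star_star, star_eq_conjTranspose] at this
  exact this.map _

theorem reApplyInnerSelf_toEuclideanCLM_smul_add_smul_conjTranspose
    (A : Matrix (Fin n) (Fin n) ℂ) (u : ℂ) (x : EuclideanSpace ℂ (Fin n)) :
    (toEuclideanCLM (𝕜 := ℂ) (star u • A + u • Aᴴ)).reApplyInnerSelf x
      = 2 * ⟪u, numRangeMap A x⟫_ℝ := by
  rw [ContinuousLinearMap.reApplyInnerSelf_apply, ← inner_conj_symm, ← numRangeMap_eq_inner,
    numRangeMap_add, numRangeMap_smul, numRangeMap_smul, numRangeMap_conjTranspose,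
    Complex.inner]
  simp only [RCLike.re_to_complex, Complex.conj_re, Complex.add_re, Complex.mul_re,
    Complex.conj_im, Complex.star_def]
  ring

theorem mem_eigenspace_of_forall_inner_le (A : Matrix (Fin n) (Fin n) ℂ) {u z : ℂ}
    (hmax : ∀ w ∈ numRange A, ⟪u, w⟫_ℝ ≤ ⟪u, z⟫_ℝ) {x : EuclideanSpace ℂ (Fin n)} (hx : ‖x‖ = 1)
    (hxz : numRangeMap A x = z) :
    x ∈ eigenspace (toEuclideanLin (star u • A + u • Aᴴ)) ((2 * ⟪u, z⟫_ℝ : ℝ) : ℂ) := by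
  subst hxz
  set T := toEuclideanCLM (n := Fin n) (𝕜 := ℂ) (star u • A + u • Aᴴ)
  have hT := isSelfAdjoint_toEuclideanCLM_smul_add_smul_conjTranspose A u
  have hx0 : x ≠ 0 := by rintro rfl; simp at hx
  have hTmax : IsMaxOn T.reApplyInnerSelf (sphere 0 ‖x‖) x := isMaxOn_iff.2 fun w hw => by
    rw [hx] at hw
    simp only [T, reApplyInnerSelf_toEuclideanCLM_smul_add_smul_conjTranspose]
    linarith [hmax _ ⟨w, hw, rfl⟩]
  have hev := hT.hasEigenvector_of_isMaxOn hx0 hTmax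
  have hTx : T x = _ • x := hev.apply_eq_smul
  have hμ : (⨆ v : {v : EuclideanSpace ℂ (Fin n) // v ≠ 0}, T.rayleighQuotient v)
      = 2 * ⟪u, numRangeMap A x⟫_ℝ := by
    have := reApplyInnerSelf_toEuclideanCLM_smul_add_smul_conjTranspose A u x
    rw [ContinuousLinearMap.reApplyInnerSelf_apply, hTx, inner_smul_left,
      inner_self_eq_norm_sq_to_K, hx] at this
    simpa [T] using this
  rw [← coe_toEuclideanCLM_eq_toEuclideanLin, ← hμ]
  exact hev.1

theorem eigenspace_toEuclideanLin_ne_top {A : Matrix (Fin n) (Fin n) ℂ} (hA : A * Aᴴ ≠ Aᴴ * A)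
    {u : ℂ} (hu : u ≠ 0) (μ : ℂ) : eigenspace (toEuclideanLin (star u • A + u • Aᴴ)) μ ≠ ⊤ := by
  intro htop
  have hscalar : star u • A + u • Aᴴ = μ • 1 := by
    refine toEuclideanLin.injective (LinearMap.ext fun v => ?_)
    have := mem_eigenspace_iff.1 (htop ▸ Submodule.mem_top : v ∈ eigenspace _ μ)
    simpa using this
  exact hA (commute_of_smul_add_smul_eq_smul_one hu hscalar).eq

end NumericalRange

theorem stmt_18 (A : Matrix (Fin 2) (Fin 2) ℂ) (hA : A * Aᴴ ≠ Aᴴ * A)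
    (z : ℂ) (hz : z ∈ frontier (numRange A))
    (x y : EuclideanSpace ℂ (Fin 2)) (hx : ‖x‖ = 1) (hy : ‖y‖ = 1)
    (hfx : numRangeMap A x = z) (hfy : numRangeMap A y = z) :
    ∃ c : ℂ, ‖c‖ = 1 ∧ y = c • x := by
  obtain ⟨u, hu, hsupp⟩ := exists_inner_le_of_mem_frontier (convex_numRange A) hz
  have hxW := mem_eigenspace_of_forall_inner_le A hsupp hx hfx
  have hyW := mem_eigenspace_of_forall_inner_le A hsupp hy hfy
  have hx0 : x ≠ 0 := by rintro rfl; simp at hx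
  obtain ⟨c, hc⟩ := exists_eq_smul_of_mem_of_ne_top (by simp)
    (eigenspace_toEuclideanLin_ne_top hA hu _) hxW hx0 hyW
  exact ⟨c, norm_eq_one_of_eq_smul hx hy hc, hc⟩
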